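/- arXiv:0909.3017 — 7 statements merged into one kernel-verified Lean document; each statement's English description precedes it below -/
import Mathlib

section
/- (Derivative Lemma, first order.) Let A, B : ℝ → ℝ → ℂ be C² functions of (x,k) (written A(x;k), B(x;k)), let k : ℝ → ℝ be differentiable, and suppose the Wronskian W(x) = A(x;k(x))·∂ₓB(x;k(x)) − ∂ₓA(x;k(x))·B(x;k(x)) is nonzero for all x in an interval I. Let a, b : ℝ → ℂ be differentiable on I and satisfy the envelope system a'(x) = u₁₁(x)a(x) + u₁₂(x)b(x), b'(x) = u₂₁(x)a(x) + u₂₂(x)b(x), where u₁₁ = k'(∂ₓₖA·B − ∂ₖA·∂ₓB)/W, u₁₂ = k'(∂ₓₖB·B − ∂ₖB·∂ₓB)/W, u₂₁ = k'(∂ₖA·∂ₓA − ∂ₓₖA·A)/W, u₂₂ = k'(∂ₓA·∂ₖB − A·∂ₓₖB)/W, all partial derivatives evaluated at (x, k(x)). Then the function f(x) = a(x)A(x;k(x)) + b(x)B(x;k(x)) is differentiable on I with f'(x) = a(x)·∂ₓA(x;k(x)) + b(x)·∂ₓB(x;k(x)). -/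
/-- Partial derivative in `x` of a basis function `F(x;k)`. -/
noncomputable def pdx (F : ℝ → ℝ → ℂ) (x k : ℝ) : ℂ := deriv (fun x' => F x' k) x

/-- Partial derivative in `k` of a basis function `F(x;k)`. -/
noncomputable def pdk (F : ℝ → ℝ → ℂ) (x k : ℝ) : ℂ := deriv (fun k' => F x k') k

/-- Mixed partial derivative: the `k`-derivative of the `x`-derivative of `F(x;k)`. -/
noncomputable def pdxk (F : ℝ → ℝ → ℂ) (x k : ℝ) : ℂ := deriv (fun k' => pdx F x k') k

/-- Second partial derivative in `x` of a basis function `F(x;k)`. -/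
noncomputable def pdxx (F : ℝ → ℝ → ℂ) (x k : ℝ) : ℂ := deriv (fun x' => pdx F x' k) x

/-- The Wronskian `W(x;k) = A ∂ₓB − ∂ₓA B` of the basis functions. -/
noncomputable def wron (A B : ℝ → ℝ → ℂ) (x k : ℝ) : ℂ :=
  A x k * pdx B x k - pdx A x k * B x k

/-- Kernel matrix entry `u₁₁ = k'(∂ₓₖA·B − ∂ₖA·∂ₓB)/W`, evaluated at `(x, k(x))`. -/
noncomputable def u11 (A B : ℝ → ℝ → ℂ) (k : ℝ → ℝ) (x : ℝ) : ℂ :=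
  (Complex.ofReal (deriv k x)) * (pdxk A x (k x) * B x (k x) - pdk A x (k x) * pdx B x (k x)) /
    wron A B x (k x)

/-- Kernel matrix entry `u₁₂ = k'(∂ₓₖB·B − ∂ₖB·∂ₓB)/W`, evaluated at `(x, k(x))`. -/
noncomputable def u12 (A B : ℝ → ℝ → ℂ) (k : ℝ → ℝ) (x : ℝ) : ℂ :=
  (Complex.ofReal (deriv k x)) * (pdxk B x (k x) * B x (k x) - pdk B x (k x) * pdx B x (k x)) /
    wron A B x (k x)

/-- Kernel matrix entry `u₂₁ = k'(∂ₖA·∂ₓA − ∂ₓₖA·A)/W`, evaluated at `(x, k(x))`. -/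
noncomputable def u21 (A B : ℝ → ℝ → ℂ) (k : ℝ → ℝ) (x : ℝ) : ℂ :=
  (Complex.ofReal (deriv k x)) * (pdk A x (k x) * pdx A x (k x) - pdxk A x (k x) * A x (k x)) /
    wron A B x (k x)

/-- Kernel matrix entry `u₂₂ = k'(∂ₓA·∂ₖB − A·∂ₓₖB)/W`, evaluated at `(x, k(x))`. -/
noncomputable def u22 (A B : ℝ → ℝ → ℂ) (k : ℝ → ℝ) (x : ℝ) : ℂ :=
  (Complex.ofReal (deriv k x)) * (pdx A x (k x) * pdk B x (k x) - A x (k x) * pdxk B x (k x)) /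
    wron A B x (k x)

/-!
By the chain rule, `f' = a'A + b'B + a(∂ₓA + k'∂ₖA) + b(∂ₓB + k'∂ₖB)` along `k = k(x)`.
The kernel matrix is built so that its columns, paired with `(A, B)`, give
`u₁₁A + u₂₁B = -k'∂ₖA` and `u₁₂A + u₂₂B = -k'∂ₖB` (the mixed partials cancel and the
Wronskian factors out), so the envelope system makes all `k'`-terms vanish.
-/

theorem hasDerivAt_comp_graph (F : ℝ → ℝ → ℂ) {k : ℝ → ℝ} {x : ℝ}
    (hF : DifferentiableAt ℝ (fun p : ℝ × ℝ => F p.1 p.2) (x, k x))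
    (hk : DifferentiableAt ℝ k x) :
    HasDerivAt (fun y => F y (k y))
      (pdx F x (k x) + ((deriv k x : ℝ) : ℂ) * pdk F x (k x)) x := by
  set L := fderiv ℝ (fun p : ℝ × ℝ => F p.1 p.2) (x, k x)
  have hL : HasFDerivAt (fun p : ℝ × ℝ => F p.1 p.2) L (x, k x) := hF.hasFDerivAt
  have hpdx : pdx F x (k x) = L (1, 0) :=
    (hL.comp_hasDerivAt_of_eq x ((hasDerivAt_id' x).prodMk (hasDerivAt_const x (k x))) rfl).deriv
  have hpdk : pdk F x (k x) = L (0, 1) :=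
    (hL.comp_hasDerivAt (k x) ((hasDerivAt_const (k x) x).prodMk (hasDerivAt_id' (k x)))).deriv
  have hgraph : ((1 : ℝ), deriv k x) = (1, 0) + deriv k x • ((0 : ℝ), (1 : ℝ)) := by
    simp
  have h := hL.comp_hasDerivAt x ((hasDerivAt_id' x).prodMk hk.hasDerivAt)
  rwa [hgraph, map_add, map_smul, ← hpdx, ← hpdk, Complex.real_smul] at h

section KernelMatrix

variable {A B : ℝ → ℝ → ℂ} {k : ℝ → ℝ} {x : ℝ}

theorem u11_mul_add_u21_mul (hW : wron A B x (k x) ≠ 0) :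
    u11 A B k x * A x (k x) + u21 A B k x * B x (k x) =
      -((deriv k x : ℝ) : ℂ) * pdk A x (k x) := by
  unfold u11 u21
  field_simp
  unfold wron
  ring

theorem u12_mul_add_u22_mul (hW : wron A B x (k x) ≠ 0) :
    u12 A B k x * A x (k x) + u22 A B k x * B x (k x) =
      -((deriv k x : ℝ) : ℂ) * pdk B x (k x) := by
  unfold u12 u22
  field_simp
  unfold wron
  ring

end KernelMatrix

theorem derivative_lemma_first_order_general
    (A B : ℝ → ℝ → ℂ)
    (hA : ContDiff ℝ 2 fun p : ℝ × ℝ => A p.1 p.2)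
    (hB : ContDiff ℝ 2 fun p : ℝ × ℝ => B p.1 p.2)
    (k : ℝ → ℝ) (hk : Differentiable ℝ k)
    (I : Set ℝ)
    (hW : ∀ x ∈ I, wron A B x (k x) ≠ 0)
    (a b : ℝ → ℂ)
    (ha : ∀ x ∈ I, HasDerivAt a (u11 A B k x * a x + u12 A B k x * b x) x)
    (hb : ∀ x ∈ I, HasDerivAt b (u21 A B k x * a x + u22 A B k x * b x) x) :
    ∀ x ∈ I, HasDerivAt (fun y => a y * A y (k y) + b y * B y (k y))
      (a x * pdx A x (k x) + b x * pdx B x (k x)) x := by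
  intro x hx
  have hAx := hasDerivAt_comp_graph A (hA.differentiable two_ne_zero _) (hk x)
  have hBx := hasDerivAt_comp_graph B (hB.differentiable two_ne_zero _) (hk x)
  refine (((ha x hx).mul hAx).add ((hb x hx).mul hBx)).congr_deriv ?_
  linear_combination a x * u11_mul_add_u21_mul (hW x hx) + b x * u12_mul_add_u22_mul (hW x hx)

/-- Derivative Lemma, first order: if the envelope coefficients `a, b`
satisfy the differential transfer matrix (envelope) system, then
`f(x) = a(x)A(x;k(x)) + b(x)B(x;k(x))` is differentiable with
`f'(x) = a(x)∂ₓA(x;k(x)) + b(x)∂ₓB(x;k(x))`. -/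
theorem derivative_lemma_first_order
    (A B : ℝ → ℝ → ℂ)
    (hA : ContDiff ℝ 2 fun p : ℝ × ℝ => A p.1 p.2)
    (hB : ContDiff ℝ 2 fun p : ℝ × ℝ => B p.1 p.2)
    (k : ℝ → ℝ) (hk : Differentiable ℝ k)
    (I : Set ℝ) (hI : IsOpen I)
    (hW : ∀ x ∈ I, wron A B x (k x) ≠ 0)
    (a b : ℝ → ℂ)
    (ha : ∀ x ∈ I, HasDerivAt a (u11 A B k x * a x + u12 A B k x * b x) x)
    (hb : ∀ x ∈ I, HasDerivAt b (u21 A B k x * a x + u22 A B k x * b x) x) :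
    ∀ x ∈ I, HasDerivAt (fun y => a y * A y (k y) + b y * B y (k y))
      (a x * pdx A x (k x) + b x * pdx B x (k x)) x :=
  derivative_lemma_first_order_general A B hA hB k hk I hW a b ha hb
end

section
/- (Fundamental Theorem of the Differential Transfer Matrix Method.) Let p, q, r : ℝ → ℝ → ℂ be coefficient functions, let A, B : ℝ → ℝ → ℂ be C³ functions of (x,k) such that for every fixed k the functions x ↦ A(x;k) and x ↦ B(x;k) satisfy p(x;k)·∂ₓₓg + q(x;k)·∂ₓg + r(x;k)·g = 0 for all x, let k : ℝ → ℝ be differentiable, and suppose the Wronskian W(x) = A(x;k(x))·∂ₓB(x;k(x)) − ∂ₓA(x;k(x))·B(x;k(x)) is nonzero for all x in an interval I. If a, b : ℝ → ℂ are differentiable on I and satisfy the envelope system a' = u₁₁a + u₁₂b, b' = u₂₁a + u₂₂b with the kernel matrix built from A, B, k, then f(x) = a(x)A(x;k(x)) + b(x)B(x;k(x)) satisfies the extended equation p(x;k(x))·f''(x) + q(x;k(x))·f'(x) + r(x;k(x))·f(x) = 0 for all x in I. -/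
/-!
Variation of parameters with a moving eigenvalue. Along the curve `y ↦ (y, k y)` the chain rule
gives `(a A + b B)' = a ∂ₓA + b ∂ₓB + [a' A + b' B + k' (a ∂ₖA + b ∂ₖB)]`, and similarly for
`a ∂ₓA + b ∂ₓB` with `∂ₓA, ∂ₓB` in place of `A, B`. The kernel matrix is precisely the solution,
by Cramer's rule with determinant `W`, of the linear system making both brackets vanish. Hence
`f' = a ∂ₓA + b ∂ₓB` and `f'' = a ∂ₓₓA + b ∂ₓₓB`, so `p f'' + q f' + r f` is the combination
`a · (equation for A) + b · (equation for B)`, evaluated at `k = k(x)`.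
-/

section PartialDerivatives

variable {F : ℝ → ℝ → ℂ}

lemma pdx_eq_fderiv {x κ : ℝ}
    (hF : DifferentiableAt ℝ (fun pt : ℝ × ℝ => F pt.1 pt.2) (x, κ)) :
    pdx F x κ = fderiv ℝ (fun pt : ℝ × ℝ => F pt.1 pt.2) (x, κ) (1, 0) :=
  (hF.hasFDerivAt.comp_hasDerivAt (f := fun x' => (x', κ)) x
    ((hasDerivAt_id' x).prodMk (hasDerivAt_const x κ))).deriv

lemma pdk_eq_fderiv {x κ : ℝ}
    (hF : DifferentiableAt ℝ (fun pt : ℝ × ℝ => F pt.1 pt.2) (x, κ)) :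
    pdk F x κ = fderiv ℝ (fun pt : ℝ × ℝ => F pt.1 pt.2) (x, κ) (0, 1) :=
  (hF.hasFDerivAt.comp_hasDerivAt (f := fun κ' => (x, κ')) κ
    ((hasDerivAt_const κ x).prodMk (hasDerivAt_id' κ))).deriv

lemma contDiff_pdx {m n : WithTop ℕ∞} (hF : ContDiff ℝ n fun pt : ℝ × ℝ => F pt.1 pt.2)
    (hmn : m + 1 ≤ n) : ContDiff ℝ m fun pt : ℝ × ℝ => pdx F pt.1 pt.2 := by
  have hFd : Differentiable ℝ fun pt : ℝ × ℝ => F pt.1 pt.2 :=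
    (hF.of_le (le_add_self.trans hmn)).differentiable one_ne_zero
  have hpdx : (fun pt : ℝ × ℝ => pdx F pt.1 pt.2) =
      fun pt => fderiv ℝ (fun pt : ℝ × ℝ => F pt.1 pt.2) pt (1, 0) :=
    funext fun pt => pdx_eq_fderiv (hFd pt)
  rw [hpdx]
  exact (hF.fderiv_right hmn).clm_apply contDiff_const

lemma hasDerivAt_along_graph {k : ℝ → ℝ} {x : ℝ}
    (hF : DifferentiableAt ℝ (fun pt : ℝ × ℝ => F pt.1 pt.2) (x, k x))
    (hk : DifferentiableAt ℝ k x) :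
    HasDerivAt (fun y => F y (k y)) (pdx F x (k x) + deriv k x * pdk F x (k x)) x := by
  have h := hF.hasFDerivAt.comp_hasDerivAt x ((hasDerivAt_id x).prodMk hk.hasDerivAt)
  have hsplit : ((1 : ℝ), deriv k x) = ((1 : ℝ), (0 : ℝ)) + deriv k x • ((0 : ℝ), (1 : ℝ)) := by
    simp
  rwa [hsplit, map_add, map_smul, Complex.real_smul, ← pdx_eq_fderiv hF,
    ← pdk_eq_fderiv hF] at h

end PartialDerivatives

/-- When `a', b'` compensate the drift of `F, G` caused by the moving parameter `k`, the combination
`a F + b G` is differentiated as if `a`, `b` and `k` were frozen. -/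
lemma hasDerivAt_combination_of_compensating {F G : ℝ → ℝ → ℂ} {k : ℝ → ℝ} {a b : ℝ → ℂ}
    {a' b' : ℂ} {x : ℝ}
    (hF : DifferentiableAt ℝ (fun pt : ℝ × ℝ => F pt.1 pt.2) (x, k x))
    (hG : DifferentiableAt ℝ (fun pt : ℝ × ℝ => G pt.1 pt.2) (x, k x))
    (hk : DifferentiableAt ℝ k x) (ha : HasDerivAt a a' x) (hb : HasDerivAt b b' x)
    (hcomp : a' * F x (k x) + b' * G x (k x) +
      deriv k x * (a x * pdk F x (k x) + b x * pdk G x (k x)) = 0) :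
    HasDerivAt (fun y => a y * F y (k y) + b y * G y (k y))
      (a x * pdx F x (k x) + b x * pdx G x (k x)) x := by
  refine ((ha.mul (hasDerivAt_along_graph hF hk)).add
    (hb.mul (hasDerivAt_along_graph hG hk))).congr_deriv ?_
  linear_combination hcomp

section KernelMatrix

variable {A B : ℝ → ℝ → ℂ} {k : ℝ → ℝ} {x : ℝ}

lemma kernel_compensates_pdk (hW : wron A B x (k x) ≠ 0) (a b : ℂ) :
    (u11 A B k x * a + u12 A B k x * b) * A x (k x) +
      (u21 A B k x * a + u22 A B k x * b) * B x (k x) +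
      deriv k x * (a * pdk A x (k x) + b * pdk B x (k x)) = 0 := by
  simp only [u11, u12, u21, u22]
  field_simp
  simp only [wron]
  ring

lemma kernel_compensates_pdxk (hW : wron A B x (k x) ≠ 0) (a b : ℂ) :
    (u11 A B k x * a + u12 A B k x * b) * pdx A x (k x) +
      (u21 A B k x * a + u22 A B k x * b) * pdx B x (k x) +
      deriv k x * (a * pdxk A x (k x) + b * pdxk B x (k x)) = 0 := by
  simp only [u11, u12, u21, u22]
  field_simp
  simp only [wron]
  ring

end KernelMatrix

/-- Fundamental Theorem of the Differential Transfer Matrix Method: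
if, for every fixed eigenvalue `k`, the basis functions `A(·;k)` and `B(·;k)` solve
the second-order equation `p g'' + q g' + r g = 0`, and the envelope coefficients
`a, b` satisfy the differential transfer matrix (envelope) system for the eigenvalue
function `k(x)`, then `f(x) = a(x)A(x;k(x)) + b(x)B(x;k(x))` solves the extended
equation `p(x;k(x)) f'' + q(x;k(x)) f' + r(x;k(x)) f = 0` on `I`. -/
theorem fundamental_theorem_DTMM
    (p q r : ℝ → ℝ → ℂ)
    (A B : ℝ → ℝ → ℂ)
    (hA : ContDiff ℝ 3 fun pt : ℝ × ℝ => A pt.1 pt.2)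
    (hB : ContDiff ℝ 3 fun pt : ℝ × ℝ => B pt.1 pt.2)
    (hAsol : ∀ (κ : ℝ) (x : ℝ),
      p x κ * pdxx A x κ + q x κ * pdx A x κ + r x κ * A x κ = 0)
    (hBsol : ∀ (κ : ℝ) (x : ℝ),
      p x κ * pdxx B x κ + q x κ * pdx B x κ + r x κ * B x κ = 0)
    (k : ℝ → ℝ) (hk : Differentiable ℝ k)
    (I : Set ℝ) (hI : IsOpen I)
    (hW : ∀ x ∈ I, wron A B x (k x) ≠ 0)
    (a b : ℝ → ℂ)
    (ha : ∀ x ∈ I, HasDerivAt a (u11 A B k x * a x + u12 A B k x * b x) x)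
    (hb : ∀ x ∈ I, HasDerivAt b (u21 A B k x * a x + u22 A B k x * b x) x) :
    ∀ x ∈ I,
      p x (k x) * deriv (deriv (fun y => a y * A y (k y) + b y * B y (k y))) x +
      q x (k x) * deriv (fun y => a y * A y (k y) + b y * B y (k y)) x +
      r x (k x) * (a x * A x (k x) + b x * B x (k x)) = 0 := by
  have hAd := hA.differentiable (by norm_num)
  have hBd := hB.differentiable (by norm_num)
  have hAxd := (contDiff_pdx (m := 1) hA (by norm_num)).differentiable one_ne_zero
  have hBxd := (contDiff_pdx (m := 1) hB (by norm_num)).differentiable one_ne_zero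
  have hf' : ∀ y ∈ I, HasDerivAt (fun y => a y * A y (k y) + b y * B y (k y))
      (a y * pdx A y (k y) + b y * pdx B y (k y)) y := fun y hy =>
    hasDerivAt_combination_of_compensating (hAd _) (hBd _) (hk y) (ha y hy) (hb y hy)
      (kernel_compensates_pdk (hW y hy) _ _)
  intro x hx
  -- `pdxx F` and `pdxk F` are, by their definitions, `pdx` and `pdk` of `pdx F`.
  have hf'' : HasDerivAt (fun y => a y * pdx A y (k y) + b y * pdx B y (k y))
      (a x * pdxx A x (k x) + b x * pdxx B x (k x)) x :=
    hasDerivAt_combination_of_compensating (hAxd _) (hBxd _) (hk x) (ha x hx) (hb x hx)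
      (kernel_compensates_pdxk (hW x hx) _ _)
  have hderiv_eq : deriv (fun y => a y * A y (k y) + b y * B y (k y)) =ᶠ[nhds x]
      fun y => a y * pdx A y (k y) + b y * pdx B y (k y) :=
    Filter.eventually_of_mem (hI.mem_nhds hx) fun y hy => (hf' y hy).deriv
  rw [(hf' x hx).deriv, hderiv_eq.deriv_eq, hf''.deriv]
  linear_combination a x * hAsol (k x) x + b x * hBsol (k x) x
end

section
/- Let k : ℝ → ℝ be differentiable with k(x) ≠ 0. For the basis functions A(x;k) = exp(−i x k) and B(x;k) = exp(+i x k) of the wave equation, the Wronskian is W(x; k(x)) = 2 i k(x), and the kernel matrix U(x) built from A, B, k equals (k'(x)/(2k(x))) times the 2×2 matrix with entries [−1 + 2ix k(x), exp(+2ix k(x)); exp(−2ix k(x)), −1 − 2ix k(x)]. -/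
open Complex

noncomputable def planeWave (c : ℂ) : ℝ → ℝ → ℂ := fun x κ => cexp (c * x * κ)

lemma hasDerivAt_cexp_const_mul_ofReal (c : ℂ) (t : ℝ) :
    HasDerivAt (fun s : ℝ => cexp (c * s)) (c * cexp (c * t)) t := by
  simpa [mul_comm] using ((hasDerivAt_id t).ofReal_comp.const_mul c).cexp

lemma pdx_planeWave (c : ℂ) (x κ : ℝ) :
    pdx (planeWave c) x κ = c * κ * planeWave c x κ := by
  have h : HasDerivAt (fun x' : ℝ => cexp (c * x' * κ)) (c * κ * cexp (c * x * κ)) x := by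
    simpa only [mul_right_comm c] using hasDerivAt_cexp_const_mul_ofReal (c * κ) x
  exact h.deriv

lemma pdk_planeWave (c : ℂ) (x κ : ℝ) :
    pdk (planeWave c) x κ = c * x * planeWave c x κ :=
  (hasDerivAt_cexp_const_mul_ofReal (c * x) κ).deriv

lemma pdxk_planeWave (c : ℂ) (x κ : ℝ) :
    pdxk (planeWave c) x κ = c * (1 + c * x * κ) * planeWave c x κ := by
  have h := ((hasDerivAt_id κ).ofReal_comp.const_mul c).mul
    (hasDerivAt_cexp_const_mul_ofReal (c * x) κ)
  simp only [pdxk, pdx_planeWave, planeWave]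
  convert h.deriv using 1
  · rfl
  · simp only [id, ofReal_one]
    ring

lemma planeWave_neg (c : ℂ) (x κ : ℝ) : planeWave (-c) x κ = (planeWave c x κ)⁻¹ := by
  simp only [planeWave, neg_mul, exp_neg]

lemma planeWave_neg_mul_planeWave (c : ℂ) (x κ : ℝ) :
    planeWave (-c) x κ * planeWave c x κ = 1 := by
  rw [planeWave_neg]
  exact inv_mul_cancel₀ (exp_ne_zero _)

lemma wron_planeWave (c : ℂ) (x κ : ℝ) :
    wron (planeWave (-c)) (planeWave c) x κ = 2 * c * κ := by
  have h := planeWave_neg_mul_planeWave c x κ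
  rw [wron, pdx_planeWave, pdx_planeWave]
  linear_combination (2 * c * κ) * h

lemma planeWave_mul_self (c : ℂ) (x κ : ℝ) :
    planeWave c x κ * planeWave c x κ = cexp (2 * c * x * κ) := by
  rw [planeWave, ← exp_add]; ring_nf

section KernelMatrix

variable {c : ℂ} {k : ℝ → ℝ} {x : ℝ}

lemma u11_planeWave (hc : c ≠ 0) :
    u11 (planeWave (-c)) (planeWave c) k x =
      ((deriv k x : ℝ) : ℂ) / (2 * k x) * (-1 + 2 * c * x * k x) := by
  have hP : planeWave c x (k x) ≠ 0 := exp_ne_zero _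
  rw [u11, wron_planeWave, pdxk_planeWave, pdk_planeWave, pdx_planeWave, planeWave_neg]
  field_simp
  ring

lemma u12_planeWave (hc : c ≠ 0) :
    u12 (planeWave (-c)) (planeWave c) k x =
      ((deriv k x : ℝ) : ℂ) / (2 * k x) * cexp (2 * c * x * k x) := by
  rw [u12, wron_planeWave, pdxk_planeWave, pdk_planeWave, pdx_planeWave,
    ← planeWave_mul_self]
  field_simp
  ring

lemma u21_planeWave (hc : c ≠ 0) :
    u21 (planeWave (-c)) (planeWave c) k x =
      ((deriv k x : ℝ) : ℂ) / (2 * k x) * cexp (-(2 * c * x * k x)) := by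
  rw [u21, wron_planeWave, pdxk_planeWave, pdk_planeWave, pdx_planeWave,
    show -(2 * c * x * k x) = 2 * -c * x * k x by ring, ← planeWave_mul_self]
  field_simp
  ring

lemma u22_planeWave (hc : c ≠ 0) :
    u22 (planeWave (-c)) (planeWave c) k x =
      ((deriv k x : ℝ) : ℂ) / (2 * k x) * (-1 - 2 * c * x * k x) := by
  have hP : planeWave c x (k x) ≠ 0 := exp_ne_zero _
  rw [u22, wron_planeWave, pdxk_planeWave, pdk_planeWave, pdx_planeWave, planeWave_neg]
  field_simp
  ring

lemma kernelMatrix_planeWave (hc : c ≠ 0) :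
    !![u11 (planeWave (-c)) (planeWave c) k x, u12 (planeWave (-c)) (planeWave c) k x;
      u21 (planeWave (-c)) (planeWave c) k x, u22 (planeWave (-c)) (planeWave c) k x] =
      ((deriv k x : ℝ) / (2 * k x) : ℝ) •
        !![-1 + 2 * c * x * k x, cexp (2 * c * x * k x);
          cexp (-(2 * c * x * k x)), -1 - 2 * c * x * k x] := by
  rw [u11_planeWave hc, u12_planeWave hc, u21_planeWave hc, u22_planeWave hc]
  simp only [Matrix.smul_of, Matrix.smul_cons, Matrix.smul_empty, real_smul]
  push_cast
  rfl

end KernelMatrix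

theorem wave_equation_kernel_matrix_general
    (k : ℝ → ℝ) (x : ℝ)
    (A B : ℝ → ℝ → ℂ)
    (hAdef : A = fun x κ : ℝ => Complex.exp (-(Complex.I * (x : ℂ) * (κ : ℂ))))
    (hBdef : B = fun x κ : ℝ => Complex.exp (Complex.I * (x : ℂ) * (κ : ℂ))) :
    wron A B x (k x) = 2 * Complex.I * (k x : ℂ) ∧
    !![u11 A B k x, u12 A B k x; u21 A B k x, u22 A B k x] =
      ((deriv k x : ℝ) / (2 * k x) : ℝ) •
        !![-1 + 2 * Complex.I * (x : ℂ) * (k x : ℂ),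
             Complex.exp (2 * Complex.I * (x : ℂ) * (k x : ℂ));
           Complex.exp (-(2 * Complex.I * (x : ℂ) * (k x : ℂ))),
             -1 - 2 * Complex.I * (x : ℂ) * (k x : ℂ)] := by
  have hA : A = planeWave (-I) := by
    ext x κ
    simp only [hAdef, planeWave, neg_mul]
  have hB : B = planeWave I := hBdef
  rw [hA, hB]
  exact ⟨wron_planeWave I x (k x), kernelMatrix_planeWave I_ne_zero⟩

/-- For the exponential basis `A(x;k) = exp(−ixk)`, `B(x;k) = exp(+ixk)`
of the wave equation, the Wronskian along `(x, k(x))` is `2ik(x)` and the kernel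
matrix equals `(k'(x)/(2k(x)))·[−1+2ixk, e^{+2ixk}; e^{−2ixk}, −1−2ixk]`. -/
theorem wave_equation_kernel_matrix
    (k : ℝ → ℝ) (hk : Differentiable ℝ k) (x : ℝ) (hkx : k x ≠ 0)
    (A B : ℝ → ℝ → ℂ)
    (hAdef : A = fun x κ : ℝ => Complex.exp (-(Complex.I * (x : ℂ) * (κ : ℂ))))
    (hBdef : B = fun x κ : ℝ => Complex.exp (Complex.I * (x : ℂ) * (κ : ℂ))) :
    wron A B x (k x) = 2 * Complex.I * (k x : ℂ) ∧
    !![u11 A B k x, u12 A B k x; u21 A B k x, u22 A B k x] =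
      ((deriv k x : ℝ) / (2 * k x) : ℝ) •
        !![-1 + 2 * Complex.I * (x : ℂ) * (k x : ℂ),
             Complex.exp (2 * Complex.I * (x : ℂ) * (k x : ℂ));
           Complex.exp (-(2 * Complex.I * (x : ℂ) * (k x : ℂ))),
             -1 - 2 * Complex.I * (x : ℂ) * (k x : ℂ)] :=
  wave_equation_kernel_matrix_general k x A B hAdef hBdef
end

section
/- Let k : ℝ → ℝ be differentiable with k(x) ≠ 0 on an interval I, and let a, b : ℝ → ℂ be differentiable on I satisfying a'(x) = (k'(x)/(2k(x)))[(−1 + 2ix k(x))·a(x) + exp(+2ix k(x))·b(x)] and b'(x) = (k'(x)/(2k(x)))[exp(−2ix k(x))·a(x) + (−1 − 2ix k(x))·b(x)]. Then the function ψ(x) = a(x)·exp(−i x k(x)) + b(x)·exp(+i x k(x)) satisfies the extended wave equation ψ''(x) + k(x)² ψ(x) = 0 on I. -/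
/-!
Write `u = a e^{-ixk}` and `v = b e^{ixk}` (`forwardWave k a`, `backwardWave k b`) for the two
travelling components of `ψ = u + v`.
The envelope system is exactly the statement that they obey the coupled-mode equations
`u' = -iku + r (v - u)`, `v' = ikv + r (u - v)` with `r = k'/(2k)`: the terms `x k'` produced by
differentiating the phase `x k(x)` cancel against the `2ixk` entries of the transfer matrix.
Then `ψ' = -ik (u - v)` and, differentiating once more, the coupling terms cancel because
`2kr = k'`, leaving `ψ'' = -k²ψ`.
-/

open Complex

theorem hasDerivAt_phase {k : ℝ → ℝ} {k' x : ℝ} (hk : HasDerivAt k k' x) :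
    HasDerivAt (fun t : ℝ => I * t * k t) (I * (k x + x * k')) x := by
  have h := ((hasDerivAt_id x).ofReal_comp.mul hk.ofReal_comp).const_mul I
  simp only [Pi.mul_apply, id, ofReal_one, one_mul, ← mul_assoc] at h
  exact h

section CoupledModes

variable {k : ℝ → ℝ} {k' x : ℝ} {r : ℂ} {u v : ℝ → ℂ}

theorem hasDerivAt_add_of_coupledModes
    (hu : HasDerivAt u (-I * k x * u x + r * (v x - u x)) x)
    (hv : HasDerivAt v (I * k x * v x + r * (u x - v x)) x) :
    HasDerivAt (fun y => u y + v y) (-I * k x * (u x - v x)) x :=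
  (hu.add hv).congr_deriv (by ring)

theorem hasDerivAt_neg_I_mul_sub_of_coupledModes
    (hu : HasDerivAt u (-I * k x * u x + r * (v x - u x)) x)
    (hv : HasDerivAt v (I * k x * v x + r * (u x - v x)) x)
    (hk : HasDerivAt k k' x) (hr : 2 * k x * r = k') :
    HasDerivAt (fun y => -I * k y * (u y - v y)) (-(k x) ^ 2 * (u x + v x)) x := by
  have h := (hk.ofReal_comp.const_mul (-I)).mul (hu.sub hv)
  simp only [Pi.sub_apply] at h
  refine h.congr_deriv ?_
  linear_combination (I * (u x - v x)) * hr + (k x : ℂ) ^ 2 * (u x + v x) * I_sq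

end CoupledModes

section Envelopes

noncomputable def forwardWave (k : ℝ → ℝ) (a : ℝ → ℂ) (x : ℝ) : ℂ := a x * exp (-(I * x * k x))

noncomputable def backwardWave (k : ℝ → ℝ) (b : ℝ → ℂ) (x : ℝ) : ℂ := b x * exp (I * x * k x)

variable {k : ℝ → ℝ} {x : ℝ} {a b : ℝ → ℂ}

theorem two_mul_mul_div_two_mul {k k' : ℝ} (hk : k ≠ 0) :
    2 * (k : ℂ) * ((k' / (2 * k) : ℝ) : ℂ) = k' := by
  exact_mod_cast mul_div_cancel₀ k' (mul_ne_zero two_ne_zero hk)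

theorem hasDerivAt_forwardWave (hk : DifferentiableAt ℝ k x) (hk0 : k x ≠ 0)
    (ha : HasDerivAt a (((deriv k x : ℝ) / (2 * k x) : ℝ) *
        ((-1 + 2 * I * (x : ℂ) * (k x : ℂ)) * a x +
          exp (2 * I * (x : ℂ) * (k x : ℂ)) * b x)) x) :
    HasDerivAt (forwardWave k a)
      (-I * k x * forwardWave k a x +
        ((deriv k x / (2 * k x) : ℝ) : ℂ) * (backwardWave k b x - forwardWave k a x)) x := by
  have h := ha.mul (hasDerivAt_phase hk.hasDerivAt).neg.cexp
  simp only [Pi.neg_apply] at h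
  unfold forwardWave backwardWave
  refine h.congr_deriv ?_
  have hexp : exp (2 * I * x * k x) * exp (-(I * x * k x)) = exp (I * x * k x) := by
    rw [← exp_add]; ring_nf
  linear_combination (((deriv k x / (2 * k x) : ℝ) : ℂ) * b x) * hexp
    + (I * x * a x * exp (-(I * x * k x))) * two_mul_mul_div_two_mul (k' := deriv k x) hk0

theorem hasDerivAt_backwardWave (hk : DifferentiableAt ℝ k x) (hk0 : k x ≠ 0)
    (hb : HasDerivAt b (((deriv k x : ℝ) / (2 * k x) : ℝ) *
        (exp (-(2 * I * (x : ℂ) * (k x : ℂ))) * a x +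
          (-1 - 2 * I * (x : ℂ) * (k x : ℂ)) * b x)) x) :
    HasDerivAt (backwardWave k b)
      (I * k x * backwardWave k b x +
        ((deriv k x / (2 * k x) : ℝ) : ℂ) * (forwardWave k a x - backwardWave k b x)) x := by
  have h := hb.mul (hasDerivAt_phase hk.hasDerivAt).cexp
  unfold forwardWave backwardWave
  refine h.congr_deriv ?_
  have hexp : exp (-(2 * I * x * k x)) * exp (I * x * k x) = exp (-(I * x * k x)) := by
    rw [← exp_add]; ring_nf
  linear_combination (((deriv k x / (2 * k x) : ℝ) : ℂ) * a x) * hexp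
    - (I * x * b x * exp (I * x * k x)) * two_mul_mul_div_two_mul (k' := deriv k x) hk0

end Envelopes

/-- If the envelope coefficients `a, b` satisfy the differential
transfer matrix system of the wave equation with exponential basis, then
`ψ(x) = a(x)e^{−ixk(x)} + b(x)e^{+ixk(x)}` solves the extended wave equation
`ψ'' + k(x)²ψ = 0` on `I`. -/
theorem wave_equation_DTMM_solution
    (k : ℝ → ℝ) (hk : Differentiable ℝ k)
    (I : Set ℝ) (hI : IsOpen I) (hk0 : ∀ x ∈ I, k x ≠ 0)
    (a b : ℝ → ℂ)
    (ha : ∀ x ∈ I, HasDerivAt a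
      (((deriv k x : ℝ) / (2 * k x) : ℝ) *
        ((-1 + 2 * Complex.I * (x : ℂ) * (k x : ℂ)) * a x +
          Complex.exp (2 * Complex.I * (x : ℂ) * (k x : ℂ)) * b x)) x)
    (hb : ∀ x ∈ I, HasDerivAt b
      (((deriv k x : ℝ) / (2 * k x) : ℝ) *
        (Complex.exp (-(2 * Complex.I * (x : ℂ) * (k x : ℂ))) * a x +
          (-1 - 2 * Complex.I * (x : ℂ) * (k x : ℂ)) * b x)) x) :
    ∀ x ∈ I,
      deriv (deriv (fun y => a y * Complex.exp (-(Complex.I * (y : ℂ) * (k y : ℂ))) +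
        b y * Complex.exp (Complex.I * (y : ℂ) * (k y : ℂ)))) x +
      (k x : ℂ) ^ 2 * (a x * Complex.exp (-(Complex.I * (x : ℂ) * (k x : ℂ))) +
        b x * Complex.exp (Complex.I * (x : ℂ) * (k x : ℂ))) = 0 := by
  intro x hx
  change deriv (deriv fun y => forwardWave k a y + backwardWave k b y) x +
    (k x : ℂ) ^ 2 * (forwardWave k a x + backwardWave k b x) = 0
  have hu := fun y (hy : y ∈ I) => hasDerivAt_forwardWave (hk y) (hk0 y hy) (ha y hy)
  have hv := fun y (hy : y ∈ I) => hasDerivAt_backwardWave (hk y) (hk0 y hy) (hb y hy)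
  have hψ' : deriv (fun y => forwardWave k a y + backwardWave k b y) =ᶠ[nhds x]
      fun y => -Complex.I * k y * (forwardWave k a y - backwardWave k b y) :=
    Filter.eventually_of_mem (hI.mem_nhds hx) fun y hy =>
      (hasDerivAt_add_of_coupledModes (hu y hy) (hv y hy)).deriv
  have hψ'' := hasDerivAt_neg_I_mul_sub_of_coupledModes (hu x hx) (hv x hx) (hk x).hasDerivAt
    (two_mul_mul_div_two_mul (hk0 x hx))
  rw [hψ'.deriv_eq, hψ''.deriv]
  ring
end

section
/- Let k : ℝ → ℝ be continuously differentiable and strictly positive on an interval containing [x₁, x₂], and let U(x) be the wave-equation kernel matrix U(x) = (k'(x)/(2k(x))) · [−1 + 2ix k(x), exp(+2ix k(x)); exp(−2ix k(x)), −1 − 2ix k(x)]. Then the trace of U(x) equals −k'(x)/k(x) for every x, and consequently det(exp(∫_{x₁}^{x₂} U(x) dx)) = k(x₁)/k(x₂), where exp denotes the matrix exponential of the entrywise-integrated 2×2 complex matrix. -/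
/-!
Liouville's formula `det (exp A) = exp (tr A)` holds for `2 × 2` matrices because, by Jacobi's
formula, `t ↦ exp (-t tr A) · det (exp (t A))` has zero derivative. The kernel has trace
`-k'/k = -(log k)'`, so the integrated kernel has trace `log k(x₁) - log k(x₂)`, and its
exponential has determinant `k(x₁)/k(x₂)`.
-/

open NormedSpace Set intervalIntegral

namespace Matrix

section DetExp

attribute [local instance] Matrix.linftyOpNormedRing Matrix.linftyOpNormedAlgebra

variable {𝕂 : Type*} [RCLike 𝕂]

theorem _root_.HasDerivAt.matrix_elem {n : Type*} [Fintype n] [DecidableEq n]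
    {M : 𝕂 → Matrix n n 𝕂} {M' : Matrix n n 𝕂} {t : 𝕂}
    (h : HasDerivAt M M' t) (i j : n) :
    HasDerivAt (fun s => M s i j) (M' i j) t :=
  (entryLinearMap 𝕂 𝕂 i j).toContinuousLinearMap.hasFDerivAt.comp_hasDerivAt t h

theorem hasDerivAt_det_fin_two {M : 𝕂 → Matrix (Fin 2) (Fin 2) 𝕂}
    {M' : Matrix (Fin 2) (Fin 2) 𝕂} {t : 𝕂} (h : HasDerivAt M M' t) :
    HasDerivAt (fun s => (M s).det) ((M t).adjugate * M').trace t := by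
  simp only [det_fin_two]
  refine (((h.matrix_elem 0 0).mul (h.matrix_elem 1 1)).sub
    ((h.matrix_elem 0 1).mul (h.matrix_elem 1 0))).congr_deriv ?_
  simp only [adjugate_fin_two, trace_fin_two, mul_apply, Fin.sum_univ_two, of_apply, cons_val',
    cons_val_zero, cons_val_one, empty_val', cons_val_fin_one]
  ring

theorem hasDerivAt_det_exp_smul (A : Matrix (Fin 2) (Fin 2) 𝕂) (t : 𝕂) :
    HasDerivAt (fun s : 𝕂 => (exp (s • A)).det) (A.trace * (exp (t • A)).det) t := by
  refine (hasDerivAt_det_fin_two (hasDerivAt_exp_smul_const' A t)).congr_deriv ?_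
  rw [trace_mul_comm, mul_assoc, mul_adjugate, mul_smul_comm, mul_one, trace_smul, smul_eq_mul,
    mul_comm]
  -- the sides differ only in the (defeq) ring and topology instances elaborated for `exp`
  rfl

theorem det_exp_fin_two (A : Matrix (Fin 2) (Fin 2) 𝕂) : (exp A).det = exp A.trace := by
  have hderiv (t : 𝕂) : HasDerivAt (fun s : 𝕂 => exp (s • -A.trace) * (exp (s • A)).det) 0 t := by
    refine ((hasDerivAt_exp_smul_const (-A.trace) t).mul
      (hasDerivAt_det_exp_smul A t)).congr_deriv ?_
    ring
  have hconst := is_const_of_deriv_eq_zero (fun t => (hderiv t).differentiableAt)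
    (fun t => (hderiv t).deriv) 1 0
  simp only [one_smul, zero_smul, exp_zero, det_one, mul_one] at hconst
  rwa [NormedSpace.exp_neg, inv_mul_eq_one₀ (NormedSpace.isUnit_exp _).ne_zero, eq_comm] at hconst

end DetExp

theorem trace_of_intervalIntegral {n E : Type*} [Fintype n] [NormedAddCommGroup E]
    [NormedSpace ℝ E] {U : ℝ → Matrix n n E} {a b : ℝ}
    (hU : ∀ i, IntervalIntegrable (fun x => U x i i) MeasureTheory.volume a b) :
    (of fun i j => ∫ x in a..b, U x i j).trace = ∫ x in a..b, (U x).trace := by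
  simp only [trace, diag_apply, of_apply]
  exact (integral_finsetSum fun i _ => hU i).symm

end Matrix

/-- The kernel `U(x)` of the differential transfer matrix method. -/
noncomputable def waveKernel (k : ℝ → ℝ) (x : ℝ) : Matrix (Fin 2) (Fin 2) ℂ :=
  ((deriv k x : ℝ) / (2 * k x) : ℝ) •
    !![-1 + 2 * Complex.I * (x : ℂ) * (k x : ℂ),
         Complex.exp (2 * Complex.I * (x : ℂ) * (k x : ℂ));
       Complex.exp (-(2 * Complex.I * (x : ℂ) * (k x : ℂ))),
         -1 - 2 * Complex.I * (x : ℂ) * (k x : ℂ)]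

theorem trace_waveKernel (k : ℝ → ℝ) (x : ℝ) :
    (waveKernel k x).trace = -((deriv k x / k x : ℝ) : ℂ) := by
  have h : deriv k x / k x = 2 * (deriv k x / (2 * k x)) := by
    rw [mul_div_assoc', mul_div_mul_left _ _ two_ne_zero]
  rw [waveKernel, Matrix.trace_smul, Matrix.trace_fin_two, h]
  simp only [Matrix.of_apply, Matrix.cons_val', Matrix.cons_val_zero, Matrix.cons_val_one,
    Matrix.empty_val', Matrix.cons_val_fin_one, Complex.real_smul]
  push_cast
  ring

theorem continuousOn_waveKernel {k : ℝ → ℝ} {s : Set ℝ} (hk : ContinuousOn k s)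
    (hk' : ContinuousOn (deriv k) s) (hk0 : ∀ x ∈ s, k x ≠ 0) :
    ContinuousOn (waveKernel k) s := by
  have hcoef : ContinuousOn (fun x => deriv k x / (2 * k x)) s :=
    hk'.div (continuousOn_const.mul hk) fun x hx => mul_ne_zero two_ne_zero (hk0 x hx)
  unfold waveKernel
  fun_prop

theorem integral_deriv_div_eq_log_sub {k : ℝ → ℝ} {a b : ℝ}
    (hk : ∀ x ∈ uIcc a b, DifferentiableAt ℝ k x) (hk' : ContinuousOn (deriv k) (uIcc a b))
    (hk0 : ∀ x ∈ uIcc a b, k x ≠ 0) :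
    ∫ x in a..b, deriv k x / k x = Real.log (k b) - Real.log (k a) :=
  integral_eq_sub_of_hasDerivAt (fun x hx => (hk x hx).hasDerivAt.log (hk0 x hx))
    (hk'.div (fun x hx => (hk x hx).continuousAt.continuousWithinAt) hk0).intervalIntegrable

/-- For the wave-equation kernel matrix `U(x)`, the trace of `U(x)`
equals `−k'(x)/k(x)`, and consequently the determinant of the matrix exponential of
the entrywise integral `∫_{x₁}^{x₂} U(x) dx` equals `k(x₁)/k(x₂)`. -/
theorem wave_equation_det_exp_integral_kernel
    (k : ℝ → ℝ) (x₁ x₂ : ℝ) (hx : x₁ ≤ x₂)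
    (J : Set ℝ) (hJ : IsOpen J) (hJI : Set.Icc x₁ x₂ ⊆ J)
    (hk : ContDiffOn ℝ 1 k J) (hkpos : ∀ x ∈ J, 0 < k x)
    (U : ℝ → Matrix (Fin 2) (Fin 2) ℂ)
    (hU : ∀ x, U x =
      ((deriv k x : ℝ) / (2 * k x) : ℝ) •
        !![-1 + 2 * Complex.I * (x : ℂ) * (k x : ℂ),
             Complex.exp (2 * Complex.I * (x : ℂ) * (k x : ℂ));
           Complex.exp (-(2 * Complex.I * (x : ℂ) * (k x : ℂ))),
             -1 - 2 * Complex.I * (x : ℂ) * (k x : ℂ)]) :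
    (∀ x ∈ J, (U x).trace = -(((deriv k x : ℝ) / k x : ℝ) : ℂ)) ∧
    (NormedSpace.exp
        (Matrix.of fun i j : Fin 2 => ∫ x in x₁..x₂, U x i j)).det =
      ((k x₁ : ℂ) / (k x₂ : ℂ)) := by
  obtain rfl : U = waveKernel k := funext hU
  refine ⟨fun x _ => trace_waveKernel k x, ?_⟩
  have hI : uIcc x₁ x₂ ⊆ J := uIcc_of_le hx ▸ hJI
  have hk0 : ∀ x ∈ uIcc x₁ x₂, k x ≠ 0 := fun x hx => (hkpos x (hI hx)).ne'
  have hkc : ContinuousOn k (uIcc x₁ x₂) := hk.continuousOn.mono hI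
  have hk'c : ContinuousOn (deriv k) (uIcc x₁ x₂) :=
    (hk.continuousOn_deriv_of_isOpen hJ le_rfl).mono hI
  have hkd : ∀ x ∈ uIcc x₁ x₂, DifferentiableAt ℝ k x := fun x hx =>
    (hk.differentiableOn one_ne_zero).differentiableAt (hJ.mem_nhds (hI hx))
  have hUc := continuousOn_waveKernel hkc hk'c hk0
  rw [Matrix.det_exp_fin_two, ← Complex.exp_eq_exp_ℂ,
    Matrix.trace_of_intervalIntegral fun i =>
      ((continuous_apply_apply i i).comp_continuousOn hUc).intervalIntegrable]
  simp_rw [trace_waveKernel]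
  rw [integral_neg, integral_ofReal, integral_deriv_div_eq_log_sub hkd hk'c hk0]
  have hk₁ : 0 < k x₁ := hkpos x₁ (hJI (left_mem_Icc.2 hx))
  have hk₂ : 0 < k x₂ := hkpos x₂ (hJI (right_mem_Icc.2 hx))
  rw [← Complex.ofReal_neg, ← Complex.ofReal_exp, neg_sub, Real.exp_sub, Real.exp_log hk₁,
    Real.exp_log hk₂, Complex.ofReal_div]
end

section
/- Let k : ℝ → ℝ be differentiable with k(x) ≠ 0, restricted to x > 0. For the basis functions A(x;k) = x^{+k} and B(x;k) = x^{−k} (real powers of x > 0) of the Euler–Cauchy equation, the Wronskian is W(x; k(x)) = −2k(x)/x, and the kernel matrix U(x) built from A, B, k equals −(k'(x)/(2k(x))) times the 2×2 matrix with entries [1 + 2k(x)·ln x, −x^{−2k(x)}; −x^{2k(x)}, 1 − 2k(x)·ln x]. -/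
/-! For `x > 0` the basis functions `x^{±κ}` have `∂ₓ = ±κ x^{±κ}/x`, `∂ₖ = ±x^{±κ} log x` and
`∂ₓₖ = ±(1 ± κ log x) x^{±κ}/x`, and `x^κ · x^{-κ} = 1`. Hence `W = -2κ/x`, and each numerator of the
kernel matrix is `c/x` for the claimed entry `c`; dividing by `W` gives `-(k'/(2k)) c`. -/

/-- Partial derivative in `x` of a real basis function `F(x;k)`. -/
noncomputable def pdxR (F : ℝ → ℝ → ℝ) (x k : ℝ) : ℝ := deriv (fun x' => F x' k) x

/-- Partial derivative in `k` of a real basis function `F(x;k)`. -/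
noncomputable def pdkR (F : ℝ → ℝ → ℝ) (x k : ℝ) : ℝ := deriv (fun k' => F x k') k

/-- Mixed partial derivative: the `k`-derivative of the `x`-derivative of `F(x;k)`. -/
noncomputable def pdxkR (F : ℝ → ℝ → ℝ) (x k : ℝ) : ℝ := deriv (fun k' => pdxR F x k') k

/-- The Wronskian `W(x;k) = A ∂ₓB − ∂ₓA B` of the real basis functions. -/
noncomputable def wronR (A B : ℝ → ℝ → ℝ) (x k : ℝ) : ℝ :=
  A x k * pdxR B x k - pdxR A x k * B x k

/-- Kernel matrix entry `u₁₁ = k'(∂ₓₖA·B − ∂ₖA·∂ₓB)/W`, evaluated at `(x, k(x))`. -/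
noncomputable def u11R (A B : ℝ → ℝ → ℝ) (k : ℝ → ℝ) (x : ℝ) : ℝ :=
  deriv k x * (pdxkR A x (k x) * B x (k x) - pdkR A x (k x) * pdxR B x (k x)) /
    wronR A B x (k x)

/-- Kernel matrix entry `u₁₂ = k'(∂ₓₖB·B − ∂ₖB·∂ₓB)/W`, evaluated at `(x, k(x))`. -/
noncomputable def u12R (A B : ℝ → ℝ → ℝ) (k : ℝ → ℝ) (x : ℝ) : ℝ :=
  deriv k x * (pdxkR B x (k x) * B x (k x) - pdkR B x (k x) * pdxR B x (k x)) /
    wronR A B x (k x)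

/-- Kernel matrix entry `u₂₁ = k'(∂ₖA·∂ₓA − ∂ₓₖA·A)/W`, evaluated at `(x, k(x))`. -/
noncomputable def u21R (A B : ℝ → ℝ → ℝ) (k : ℝ → ℝ) (x : ℝ) : ℝ :=
  deriv k x * (pdkR A x (k x) * pdxR A x (k x) - pdxkR A x (k x) * A x (k x)) /
    wronR A B x (k x)

/-- Kernel matrix entry `u₂₂ = k'(∂ₓA·∂ₖB − A·∂ₓₖB)/W`, evaluated at `(x, k(x))`. -/
noncomputable def u22R (A B : ℝ → ℝ → ℝ) (k : ℝ → ℝ) (x : ℝ) : ℝ :=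
  deriv k x * (pdxR A x (k x) * pdkR B x (k x) - A x (k x) * pdxkR B x (k x)) /
    wronR A B x (k x)

open Real

section PowerBasis

variable {x : ℝ} (hx : 0 < x) (σ κ : ℝ)
include hx

lemma hasDerivAt_const_rpow_mul :
    HasDerivAt (fun κ : ℝ => x ^ (σ * κ)) (σ * x ^ (σ * κ) * log x) κ := by
  convert ((hasDerivAt_id' κ).const_mul σ).const_rpow hx using 1
  ring

lemma pdxR_rpow_mul : pdxR (fun x κ : ℝ => x ^ (σ * κ)) x κ = σ * κ * x ^ (σ * κ) / x := by
  rw [pdxR, (hasDerivAt_rpow_const (Or.inl hx.ne')).deriv, rpow_sub_one hx.ne', mul_div_assoc]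

lemma pdkR_rpow_mul : pdkR (fun x κ : ℝ => x ^ (σ * κ)) x κ = σ * x ^ (σ * κ) * log x :=
  (hasDerivAt_const_rpow_mul hx σ κ).deriv

lemma pdxkR_rpow_mul :
    pdxkR (fun x κ : ℝ => x ^ (σ * κ)) x κ = σ * (1 + σ * κ * log x) * x ^ (σ * κ) / x := by
  have hpdx : (fun κ => pdxR (fun x κ : ℝ => x ^ (σ * κ)) x κ)
      = fun κ => σ * κ * x ^ (σ * κ) / x := funext (pdxR_rpow_mul hx σ)
  have hderiv : HasDerivAt (fun κ => σ * κ * x ^ (σ * κ) / x)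
      ((σ * x ^ (σ * κ) + σ * κ * (σ * x ^ (σ * κ) * log x)) / x) κ :=
    ((((hasDerivAt_id' κ).const_mul σ).congr_deriv (mul_one σ)).mul
      (hasDerivAt_const_rpow_mul hx σ κ)).div_const x
  rw [pdxkR, hpdx, hderiv.deriv]
  ring

end PowerBasis

-- At `κ = 0` both sides are `0`, by the convention `a / 0 = 0`.
lemma mul_div_div_neg_two_mul_div {x : ℝ} (hx : x ≠ 0) (d κ c : ℝ) :
    d * (c / x) / (-(2 * κ) / x) = -(d / (2 * κ)) * c := by
  rw [← mul_div_assoc, div_div_div_cancel_right₀ hx]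
  ring

section EulerCauchyBasis

variable {x : ℝ} (hx : 0 < x) (κ : ℝ)
include hx

lemma pdxR_rpow : pdxR (fun x κ : ℝ => x ^ κ) x κ = κ * x ^ κ / x := by
  simpa only [one_mul] using pdxR_rpow_mul hx 1 κ

lemma pdkR_rpow : pdkR (fun x κ : ℝ => x ^ κ) x κ = x ^ κ * log x := by
  simpa only [one_mul] using pdkR_rpow_mul hx 1 κ

lemma pdxkR_rpow : pdxkR (fun x κ : ℝ => x ^ κ) x κ = (1 + κ * log x) * x ^ κ / x := by
  simpa only [one_mul] using pdxkR_rpow_mul hx 1 κ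

lemma pdxR_rpow_neg : pdxR (fun x κ : ℝ => x ^ (-κ)) x κ = -κ * x ^ (-κ) / x := by
  simpa only [neg_one_mul] using pdxR_rpow_mul hx (-1) κ

lemma pdkR_rpow_neg : pdkR (fun x κ : ℝ => x ^ (-κ)) x κ = -x ^ (-κ) * log x := by
  simpa only [neg_one_mul] using pdkR_rpow_mul hx (-1) κ

lemma pdxkR_rpow_neg :
    pdxkR (fun x κ : ℝ => x ^ (-κ)) x κ = -(1 - κ * log x) * x ^ (-κ) / x := by
  simpa only [neg_one_mul, neg_mul, one_mul, sub_eq_add_neg] using pdxkR_rpow_mul hx (-1) κ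

lemma wronR_rpow : wronR (fun x κ : ℝ => x ^ κ) (fun x κ : ℝ => x ^ (-κ)) x κ = -(2 * κ) / x := by
  rw [wronR, pdxR_rpow hx, pdxR_rpow_neg hx, rpow_neg hx.le]
  have hpow := (rpow_pos_of_pos hx κ).ne'
  field_simp
  ring

variable (k : ℝ → ℝ)

lemma u11R_rpow : u11R (fun x κ : ℝ => x ^ κ) (fun x κ : ℝ => x ^ (-κ)) k x
    = -(deriv k x / (2 * k x)) * (1 + 2 * k x * log x) := by
  rw [u11R, wronR_rpow hx, ← mul_div_div_neg_two_mul_div hx.ne']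
  rw [pdxkR_rpow hx, pdkR_rpow hx, pdxR_rpow_neg hx, rpow_neg hx.le]
  have hpow := (rpow_pos_of_pos hx (k x)).ne'
  field_simp
  ring

lemma u12R_rpow : u12R (fun x κ : ℝ => x ^ κ) (fun x κ : ℝ => x ^ (-κ)) k x
    = -(deriv k x / (2 * k x)) * -x ^ (-(2 * k x)) := by
  rw [u12R, wronR_rpow hx, ← mul_div_div_neg_two_mul_div hx.ne']
  rw [pdxkR_rpow_neg hx, pdkR_rpow_neg hx, pdxR_rpow_neg hx]
  simp only [rpow_neg hx.le, two_mul, rpow_add hx]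
  have hpow := (rpow_pos_of_pos hx (k x)).ne'
  field_simp
  ring

lemma u21R_rpow : u21R (fun x κ : ℝ => x ^ κ) (fun x κ : ℝ => x ^ (-κ)) k x
    = -(deriv k x / (2 * k x)) * -x ^ (2 * k x) := by
  rw [u21R, wronR_rpow hx, ← mul_div_div_neg_two_mul_div hx.ne']
  rw [pdxkR_rpow hx, pdkR_rpow hx, pdxR_rpow hx, two_mul, rpow_add hx]
  field_simp
  ring

lemma u22R_rpow : u22R (fun x κ : ℝ => x ^ κ) (fun x κ : ℝ => x ^ (-κ)) k x
    = -(deriv k x / (2 * k x)) * (1 - 2 * k x * log x) := by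
  rw [u22R, wronR_rpow hx, ← mul_div_div_neg_two_mul_div hx.ne']
  rw [pdxkR_rpow_neg hx, pdkR_rpow_neg hx, pdxR_rpow hx, rpow_neg hx.le]
  have hpow := (rpow_pos_of_pos hx (k x)).ne'
  field_simp
  ring

end EulerCauchyBasis

theorem euler_cauchy_kernel_matrix_general
    (k : ℝ → ℝ) (x : ℝ) (hx : 0 < x)
    (A B : ℝ → ℝ → ℝ)
    (hAdef : A = fun x κ : ℝ => x ^ κ)
    (hBdef : B = fun x κ : ℝ => x ^ (-κ)) :
    wronR A B x (k x) = -(2 * k x) / x ∧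
    !![u11R A B k x, u12R A B k x; u21R A B k x, u22R A B k x] =
      (-(deriv k x / (2 * k x))) •
        !![1 + 2 * k x * Real.log x, -(x ^ (-(2 * k x)));
           -(x ^ (2 * k x)), 1 - 2 * k x * Real.log x] := by
  subst hAdef hBdef
  refine ⟨wronR_rpow hx (k x), ?_⟩
  rw [u11R_rpow hx, u12R_rpow hx, u21R_rpow hx, u22R_rpow hx]
  ext i j
  fin_cases i <;> fin_cases j <;> rfl

/-- For the power basis `A(x;k) = x^{+k}`, `B(x;k) = x^{−k}` (real powers,
`x > 0`) of the Euler–Cauchy equation, the Wronskian along `(x, k(x))` is `−2k(x)/x`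
and the kernel matrix equals
`−(k'(x)/(2k(x)))·[1 + 2k ln x, −x^{−2k}; −x^{2k}, 1 − 2k ln x]`. -/
theorem euler_cauchy_kernel_matrix
    (k : ℝ → ℝ) (hk : Differentiable ℝ k) (x : ℝ) (hx : 0 < x) (hkx : k x ≠ 0)
    (A B : ℝ → ℝ → ℝ)
    (hAdef : A = fun x κ : ℝ => x ^ κ)
    (hBdef : B = fun x κ : ℝ => x ^ (-κ)) :
    wronR A B x (k x) = -(2 * k x) / x ∧
    !![u11R A B k x, u12R A B k x; u21R A B k x, u22R A B k x] =
      (-(deriv k x / (2 * k x))) •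
        !![1 + 2 * k x * Real.log x, -(x ^ (-(2 * k x)));
           -(x ^ (2 * k x)), 1 - 2 * k x * Real.log x] :=
  euler_cauchy_kernel_matrix_general k x hx A B hAdef hBdef
end

section
/- Let k : ℝ → ℝ be differentiable with k(x) ≠ 0 on an interval I ⊆ (0, ∞), and let a, b : ℝ → ℝ be differentiable on I satisfying a'(x) = −(k'(x)/(2k(x)))[(1 + 2k(x)·ln x)·a(x) − x^{−2k(x)}·b(x)] and b'(x) = −(k'(x)/(2k(x)))[−x^{2k(x)}·a(x) + (1 − 2k(x)·ln x)·b(x)]. Then the function ψ(x) = a(x)·x^{k(x)} + b(x)·x^{−k(x)} satisfies the extended Euler–Cauchy equation x²ψ''(x) + xψ'(x) − k(x)²ψ(x) = 0 on I. -/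
/-!
Write `P = x^k`, `Q = x^{-k}`, `ψ = aP + bQ` and `φ = aP - bQ`. Since `P' = P (k/x + k' ln x)` and
`Q' = -Q (k/x + k' ln x)`, the envelope system is exactly what cancels every term containing
`ln x` or `a', b'`: it gives `ψ' = (k/x) φ` and `φ' = -(k'/k) φ + (k/x) ψ`. Differentiating
`xψ' = kφ` once more yields `x²ψ'' + xψ' = k²ψ`.
-/

open Real

-- The right-hand sides of the envelope system for `a` and `b`; `k'` stands for the value `k'(x)`.
noncomputable def dtmmDerivA (k k' a b x : ℝ) : ℝ :=
  -(k' / (2 * k)) * ((1 + 2 * k * log x) * a - x ^ (-(2 * k)) * b)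

noncomputable def dtmmDerivB (k k' a b x : ℝ) : ℝ :=
  -(k' / (2 * k)) * (-(x ^ (2 * k)) * a + (1 - 2 * k * log x) * b)

section Algebra

variable {k k' a b x : ℝ}

lemma rpow_neg_two_mul_mul_rpow (hx : 0 < x) : x ^ (-(2 * k)) * x ^ k = x ^ (-k) := by
  rw [← rpow_add hx]; ring_nf

lemma rpow_two_mul_mul_rpow_neg (hx : 0 < x) : x ^ (2 * k) * x ^ (-k) = x ^ k := by
  rw [← rpow_add hx]; ring_nf

lemma dtmmDeriv_mul_rpow_add (hx : 0 < x) (hk : k ≠ 0) :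
    dtmmDerivA k k' a b x * x ^ k + dtmmDerivB k k' a b x * x ^ (-k) =
      -(k' * log x) * (a * x ^ k - b * x ^ (-k)) := by
  unfold dtmmDerivA dtmmDerivB
  linear_combination (norm := skip)
    (k' / (2 * k) * b) * rpow_neg_two_mul_mul_rpow (k := k) hx +
    (k' / (2 * k) * a) * rpow_two_mul_mul_rpow_neg (k := k) hx
  field_simp
  ring

lemma dtmmDeriv_mul_rpow_sub (hx : 0 < x) (hk : k ≠ 0) :
    dtmmDerivA k k' a b x * x ^ k - dtmmDerivB k k' a b x * x ^ (-k) =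
      -(k' / k) * (a * x ^ k - b * x ^ (-k)) - k' * log x * (a * x ^ k + b * x ^ (-k)) := by
  unfold dtmmDerivA dtmmDerivB
  linear_combination (norm := skip)
    (k' / (2 * k) * b) * rpow_neg_two_mul_mul_rpow (k := k) hx +
    (-(k' / (2 * k)) * a) * rpow_two_mul_mul_rpow_neg (k := k) hx
  field_simp
  ring

end Algebra

section Calculus

variable {k a b : ℝ → ℝ} {k' a' b' x : ℝ}

lemma hasDerivAt_rpow_self (hk : HasDerivAt k k' x) (hx : 0 < x) :
    HasDerivAt (fun y => y ^ k y) (x ^ k x * (k x / x + k' * log x)) x := by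
  convert (hasDerivAt_id' x).rpow hk hx using 1
  rw [rpow_sub_one hx.ne']
  field_simp

lemma hasDerivAt_mul_rpow_add_mul_rpow_neg (hk : HasDerivAt k k' x) (ha : HasDerivAt a a' x)
    (hb : HasDerivAt b b' x) (hx : 0 < x) :
    HasDerivAt (fun y => a y * y ^ k y + b y * y ^ (-(k y)))
      (a' * x ^ k x + b' * x ^ (-(k x)) +
        (k x / x + k' * log x) * (a x * x ^ k x - b x * x ^ (-(k x)))) x := by
  refine ((ha.mul (hasDerivAt_rpow_self hk hx)).add
    (hb.mul (hasDerivAt_rpow_self (k := fun y => -k y) hk.neg hx))).congr_deriv ?_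
  ring

lemma hasDerivAt_mul_rpow_sub_mul_rpow_neg (hk : HasDerivAt k k' x) (ha : HasDerivAt a a' x)
    (hb : HasDerivAt b b' x) (hx : 0 < x) :
    HasDerivAt (fun y => a y * y ^ k y - b y * y ^ (-(k y)))
      (a' * x ^ k x - b' * x ^ (-(k x)) +
        (k x / x + k' * log x) * (a x * x ^ k x + b x * x ^ (-(k x)))) x := by
  refine ((ha.mul (hasDerivAt_rpow_self hk hx)).sub
    (hb.mul (hasDerivAt_rpow_self (k := fun y => -k y) hk.neg hx))).congr_deriv ?_
  ring

variable (hk : HasDerivAt k k' x) (hx : 0 < x) (hk0 : k x ≠ 0)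
  (ha : HasDerivAt a (dtmmDerivA (k x) k' (a x) (b x) x) x)
  (hb : HasDerivAt b (dtmmDerivB (k x) k' (a x) (b x) x) x)
include hk hx hk0 ha hb

lemma hasDerivAt_dtmm_envelope_add :
    HasDerivAt (fun y => a y * y ^ k y + b y * y ^ (-(k y)))
      (k x / x * (a x * x ^ k x - b x * x ^ (-(k x)))) x := by
  convert hasDerivAt_mul_rpow_add_mul_rpow_neg hk ha hb hx using 1
  rw [dtmmDeriv_mul_rpow_add hx hk0]
  ring

lemma hasDerivAt_dtmm_envelope_sub :
    HasDerivAt (fun y => a y * y ^ k y - b y * y ^ (-(k y)))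
      (-(k' / k x) * (a x * x ^ k x - b x * x ^ (-(k x))) +
        k x / x * (a x * x ^ k x + b x * x ^ (-(k x)))) x := by
  convert hasDerivAt_mul_rpow_sub_mul_rpow_neg hk ha hb hx using 1
  rw [dtmmDeriv_mul_rpow_sub hx hk0]
  ring

end Calculus

/-- If the envelope coefficients `a, b` satisfy the differential
transfer matrix system of the Euler–Cauchy equation with power basis `x^{±k(x)}`,
then `ψ(x) = a(x)x^{k(x)} + b(x)x^{−k(x)}` solves the extended Euler–Cauchy equation
`x²ψ'' + xψ' − k(x)²ψ = 0` on `I ⊆ (0,∞)`. -/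
theorem euler_cauchy_DTMM_solution
    (k : ℝ → ℝ) (hk : Differentiable ℝ k)
    (I : Set ℝ) (hI : IsOpen I) (hIpos : I ⊆ Set.Ioi (0 : ℝ))
    (hk0 : ∀ x ∈ I, k x ≠ 0)
    (a b : ℝ → ℝ)
    (ha : ∀ x ∈ I, HasDerivAt a
      (-(deriv k x / (2 * k x)) *
        ((1 + 2 * k x * Real.log x) * a x - x ^ (-(2 * k x)) * b x)) x)
    (hb : ∀ x ∈ I, HasDerivAt b
      (-(deriv k x / (2 * k x)) *
        (-(x ^ (2 * k x)) * a x + (1 - 2 * k x * Real.log x) * b x)) x) :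
    ∀ x ∈ I,
      x ^ 2 * deriv (deriv (fun y => a y * y ^ k y + b y * y ^ (-(k y)))) x +
      x * deriv (fun y => a y * y ^ k y + b y * y ^ (-(k y))) x -
      (k x) ^ 2 * (a x * x ^ k x + b x * x ^ (-(k x))) = 0 := by
  intro x hx
  have hx0 : 0 < x := hIpos hx
  have hψ : ∀ y ∈ I, HasDerivAt (fun y => a y * y ^ k y + b y * y ^ (-(k y)))
      (k y / y * (a y * y ^ k y - b y * y ^ (-(k y)))) y := fun y hy =>
    hasDerivAt_dtmm_envelope_add (hk y).hasDerivAt (hIpos hy) (hk0 y hy) (ha y hy) (hb y hy)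
  have hφ := hasDerivAt_dtmm_envelope_sub (hk x).hasDerivAt hx0 (hk0 x hx) (ha x hx) (hb x hx)
  have hψ' := (((hk x).hasDerivAt.div (hasDerivAt_id' x) hx0.ne').mul hφ).congr_of_eventuallyEq
    ((hI.eventually_mem hx).mono fun y hy => (hψ y hy).deriv)
  rw [hψ'.deriv, (hψ x hx).deriv]
  simp only [Pi.div_apply]
  field_simp [hk0 x hx]
  ring
end
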